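/- arXiv:1502.06928 — 5 statements merged into one kernel-verified Lean document; each statement's English description precedes it below -/
import Mathlib

section
/- Let τ > 0 and let α, β : ℝ → ℝ be differentiable at λ*. Define ω(λ) = √(β(λ)² − α(λ)²) and H(λ) = α(λ) + β(λ)·cos(τ·ω(λ)). Assume that at λ* one has ω* := ω(λ*) > 0, α(λ*) + β(λ*)·cos(τω*) = 0 and β(λ*)·sin(τω*) = −ω* (so β(λ*) ≠ 0). Then H is differentiable at λ* and H'(λ*) = [β(λ*)·α'(λ*)·(1 − α(λ*)τ) + β'(λ*)·(τ·β(λ*)² − α(λ*))] / β(λ*). Consequently H'(λ*) = 0 if and only if β(λ*)·α'(λ*)·(1 − α(λ*)τ) + β'(λ*)·(τ·β(λ*)² − α(λ*)) = 0 (the tangency condition of the parameter path with the Hopf bifurcation curve). -/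
/-- If the parameter path (α(λ), β(λ)) lies on the Hopf curve at λ*,
then H(λ) = α(λ) + β(λ)·cos(τ·ω(λ)) (with ω(λ) = √(β(λ)²−α(λ)²)) is differentiable
at λ* with derivative [β·α'·(1−ατ) + β'·(τβ²−α)]/β, which vanishes iff the tangency
condition β·α'·(1−ατ) + β'·(τβ²−α) = 0 holds. -/
theorem stmt1 (τ : ℝ) (hτ : 0 < τ) (α β : ℝ → ℝ) (lam : ℝ) (α₁ β₁ : ℝ)
    (hα : HasDerivAt α α₁ lam) (hβ : HasDerivAt β β₁ lam)
    (ω : ℝ → ℝ) (hωdef : ∀ l, ω l = Real.sqrt ((β l) ^ 2 - (α l) ^ 2))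
    (H : ℝ → ℝ) (hHdef : ∀ l, H l = α l + β l * Real.cos (τ * ω l))
    (hω : 0 < ω lam)
    (h1 : α lam + β lam * Real.cos (τ * ω lam) = 0)
    (h2 : β lam * Real.sin (τ * ω lam) = -(ω lam)) :
    HasDerivAt H
      ((β lam * α₁ * (1 - α lam * τ) + β₁ * (τ * (β lam) ^ 2 - α lam)) / β lam) lam ∧
    (deriv H lam = 0 ↔
      β lam * α₁ * (1 - α lam * τ) + β₁ * (τ * (β lam) ^ 2 - α lam) = 0) := by
  have hb : β lam ≠ 0 := by
    intro h
    rw [h] at h2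
    simp at h2
    linarith
  have hglam : β lam ^ 2 - α lam ^ 2 ≠ 0 := by
    have h0 : (0:ℝ) < Real.sqrt (β lam ^ 2 - α lam ^ 2) := hωdef lam ▸ hω
    have := Real.sqrt_pos.mp h0
    linarith
  have hg : HasDerivAt (fun l => β l ^ 2 - α l ^ 2)
      (2 * β lam * β₁ - 2 * α lam * α₁) lam := by
    have : HasDerivAt (fun l => β l ^ 2 - α l ^ 2) _ lam := (hβ.pow 2).sub (hα.pow 2)
    convert this using 1
    push_cast
    ring
  have hωfun : ω = fun l => Real.sqrt (β l ^ 2 - α l ^ 2) := funext hωdef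
  have hωd : HasDerivAt ω
      ((2 * β lam * β₁ - 2 * α lam * α₁) / (2 * ω lam)) lam := by
    rw [hωfun]
    have := hg.sqrt hglam
    rw [← hωdef lam] at this
    exact this.congr_deriv (by rw [hωdef])
  have hcosd : HasDerivAt (fun l => Real.cos (τ * ω l))
      (-Real.sin (τ * ω lam) *
        (τ * ((2 * β lam * β₁ - 2 * α lam * α₁) / (2 * ω lam)))) lam := by
    exact (((hasDerivAt_const lam τ).mul hωd).cos).congr_deriv (by simp only [Pi.mul_apply]; ring)
  have hHd : HasDerivAt H
      (α₁ + (β₁ * Real.cos (τ * ω lam) +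
        β lam * (-Real.sin (τ * ω lam) *
          (τ * ((2 * β lam * β₁ - 2 * α lam * α₁) / (2 * ω lam)))))) lam := by
    have := hα.add (hβ.mul hcosd)
    have hHfun : H = fun l => α l + β l * Real.cos (τ * ω l) := funext hHdef
    rwa [hHfun]
  have hcos : Real.cos (τ * ω lam) = -(α lam) / β lam := by
    field_simp
    linarith
  have hw : ω lam ≠ 0 := ne_of_gt hω
  have key : α₁ + (β₁ * Real.cos (τ * ω lam) +
        β lam * (-Real.sin (τ * ω lam) *
          (τ * ((2 * β lam * β₁ - 2 * α lam * α₁) / (2 * ω lam))))) =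
      (β lam * α₁ * (1 - α lam * τ) + β₁ * (τ * (β lam) ^ 2 - α lam)) / β lam := by
    rw [hcos]
    have hsin : Real.sin (τ * ω lam) = -(ω lam) / β lam := by
      field_simp
      linarith
    rw [hsin]
    field_simp
    ring
  rw [key] at hHd
  refine ⟨hHd, ?_⟩
  rw [hHd.deriv]
  constructor
  · intro h
    have := (div_eq_zero_iff.mp h).resolve_right hb
    exact this
  · intro h
    rw [h, zero_div]
end

section
/- Let α, β, τ, α₁, β₁, α₂, β₂ be real numbers with β ≠ 0, β₁ ≠ 0 and β² > α². Set D = (β²τ² + 1)(α² + β²) − 4αβ²τ (then D > 0). Define κ₁ = β·τ·(α² − β²)·(β²τ² + ατ − 2)/D^{3/2}, κ₂ = (ατ − 1)²·β²·(β(ατ − 1)·α₂ + (α − β²τ)·β₂)/(β₁²·D^{3/2}), and G = (ατ − 1)³·β²·α₂ + β·(ατ − 1)²·(α − β²τ)·β₂ − β₁²·τ·(α² − β²)·(β²τ² + ατ − 2). Then κ₁ − κ₂ = −β·G/(β₁²·D^{3/2}). In particular, κ₁ = κ₂ if and only if G = 0. -/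
/-! `D` is the sum of squares `(α - β²τ)² + β²(ατ - 1)²`, and both squares vanishing would
force `α² = β²`; so `D^{3/2} ≠ 0`. The identity for `κ₁ - κ₂` is then a common-denominator
computation, and its prefactor `-β / (β₁² D^{3/2})` is nonzero. -/

lemma hopf_discriminant_eq_sum_sq (α β τ : ℝ) :
    (β ^ 2 * τ ^ 2 + 1) * (α ^ 2 + β ^ 2) - 4 * α * β ^ 2 * τ =
      (α - β ^ 2 * τ) ^ 2 + (β * (α * τ - 1)) ^ 2 := by
  ring

lemma hopf_discriminant_pos {α β : ℝ} (τ : ℝ) (hαβ : α ^ 2 < β ^ 2) :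
    0 < (β ^ 2 * τ ^ 2 + 1) * (α ^ 2 + β ^ 2) - 4 * α * β ^ 2 * τ := by
  rw [hopf_discriminant_eq_sum_sq]
  by_contra! hD
  have hu : α - β ^ 2 * τ = 0 := by nlinarith [sq_nonneg (α - β ^ 2 * τ), sq_nonneg (β * (α * τ - 1))]
  have hv : β * (α * τ - 1) = 0 := by nlinarith [sq_nonneg (α - β ^ 2 * τ), sq_nonneg (β * (α * τ - 1))]
  have : α ^ 2 - β ^ 2 = α * (α - β ^ 2 * τ) + β * (β * (α * τ - 1)) := by ring
  rw [hu, hv] at this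
  linarith

lemma curvature_sub_eq {α β τ β₁ α₂ β₂ c : ℝ} (hβ₁ : β₁ ≠ 0) (hc : c ≠ 0) :
    β * τ * (α ^ 2 - β ^ 2) * (β ^ 2 * τ ^ 2 + α * τ - 2) / c -
        (α * τ - 1) ^ 2 * β ^ 2 * (β * (α * τ - 1) * α₂ + (α - β ^ 2 * τ) * β₂) / (β₁ ^ 2 * c) =
      -β * ((α * τ - 1) ^ 3 * β ^ 2 * α₂ + β * (α * τ - 1) ^ 2 * (α - β ^ 2 * τ) * β₂ -
          β₁ ^ 2 * τ * (α ^ 2 - β ^ 2) * (β ^ 2 * τ ^ 2 + α * τ - 2)) / (β₁ ^ 2 * c) := by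
  field_simp
  ring

theorem stmt2_general (α β τ β₁ α₂ β₂ : ℝ) (hβ : β ≠ 0) (hβ₁ : β₁ ≠ 0)
    (hαβ : α ^ 2 < β ^ 2) :
    let D : ℝ := (β ^ 2 * τ ^ 2 + 1) * (α ^ 2 + β ^ 2) - 4 * α * β ^ 2 * τ
    let κ₁ : ℝ := β * τ * (α ^ 2 - β ^ 2) * (β ^ 2 * τ ^ 2 + α * τ - 2) / D ^ ((3 : ℝ) / 2)
    let κ₂ : ℝ := (α * τ - 1) ^ 2 * β ^ 2 * (β * (α * τ - 1) * α₂ + (α - β ^ 2 * τ) * β₂) /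
      (β₁ ^ 2 * D ^ ((3 : ℝ) / 2))
    let G : ℝ := (α * τ - 1) ^ 3 * β ^ 2 * α₂ + β * (α * τ - 1) ^ 2 * (α - β ^ 2 * τ) * β₂ -
      β₁ ^ 2 * τ * (α ^ 2 - β ^ 2) * (β ^ 2 * τ ^ 2 + α * τ - 2)
    0 < D ∧
    κ₁ - κ₂ = -β * G / (β₁ ^ 2 * D ^ ((3 : ℝ) / 2)) ∧
    (κ₁ = κ₂ ↔ G = 0) := by
  intro D κ₁ κ₂ G
  have hD : 0 < D := hopf_discriminant_pos τ hαβ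
  have hpow : D ^ ((3 : ℝ) / 2) ≠ 0 := (Real.rpow_pos_of_pos hD _).ne'
  have hdenom : β₁ ^ 2 * D ^ ((3 : ℝ) / 2) ≠ 0 := mul_ne_zero (pow_ne_zero 2 hβ₁) hpow
  have hdiff : κ₁ - κ₂ = -β * G / (β₁ ^ 2 * D ^ ((3 : ℝ) / 2)) := curvature_sub_eq hβ₁ hpow
  refine ⟨hD, hdiff, ?_⟩
  rw [← sub_eq_zero, hdiff, div_eq_zero_iff, mul_eq_zero, neg_eq_zero]
  simp only [hβ, hdenom, false_or, or_false]

/-- With D = (β²τ²+1)(α²+β²) − 4αβ²τ > 0, the difference of the signed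
curvatures κ₁ (Hopf curve) and κ₂ (parameter path) equals −β·G/(β₁²·D^{3/2}), where G
is the curvature nondegeneracy quantity; in particular κ₁ = κ₂ iff G = 0. -/
theorem stmt2 (α β τ α₁ β₁ α₂ β₂ : ℝ) (hβ : β ≠ 0) (hβ₁ : β₁ ≠ 0)
    (hαβ : α ^ 2 < β ^ 2) :
    let D : ℝ := (β ^ 2 * τ ^ 2 + 1) * (α ^ 2 + β ^ 2) - 4 * α * β ^ 2 * τ
    let κ₁ : ℝ := β * τ * (α ^ 2 - β ^ 2) * (β ^ 2 * τ ^ 2 + α * τ - 2) / D ^ ((3 : ℝ) / 2)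
    let κ₂ : ℝ := (α * τ - 1) ^ 2 * β ^ 2 * (β * (α * τ - 1) * α₂ + (α - β ^ 2 * τ) * β₂) /
      (β₁ ^ 2 * D ^ ((3 : ℝ) / 2))
    let G : ℝ := (α * τ - 1) ^ 3 * β ^ 2 * α₂ + β * (α * τ - 1) ^ 2 * (α - β ^ 2 * τ) * β₂ -
      β₁ ^ 2 * τ * (α ^ 2 - β ^ 2) * (β ^ 2 * τ ^ 2 + α * τ - 2)
    0 < D ∧
    κ₁ - κ₂ = -β * G / (β₁ ^ 2 * D ^ ((3 : ℝ) / 2)) ∧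
    (κ₁ = κ₂ ↔ G = 0) :=
  stmt2_general α β τ β₁ α₂ β₂ hβ hβ₁ hαβ
end

section
/- Let τ > 0 and let α, β, ω, α₁, β₁, α₂, β₂ be real numbers with β ≠ 0, ατ ≠ 1, ω > 0, ω² = β² − α², and suppose the tangency condition β·α₁·(1 − ατ) + β₁·(τβ² − α) = 0 holds. Set E = (iω − α)/β, ψ = 1/((1 − ατ) + iωτ), and ξ₁ = ψ·(α₁ + β₁·E). Then Re( ψ·[ α₂ + β₂·E − 2τ·β₁·E·ξ₁ + τ²·β·E·ξ₁² ] ) = G / ( β²·(ατ − 1)²·(−β²τ² + 2ατ − 1) ), where G = (ατ − 1)³·β²·α₂ + β·(ατ − 1)²·(α − β²τ)·β₂ − β₁²·τ·(α² − β²)·(β²τ² + ατ − 2). -/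
/-!
The tangency condition says exactly that `α₁ + β₁ E` is a purely imaginary multiple of
`D = 1/ψ = (1 - ατ) + iωτ`, so `ξ₁ = -iωβ₁/(β(ατ - 1))` is purely imaginary. For the bracket `X`, the real part of
`ψ X = conj D · X / |D|²` is then elementary, since `|D|² = β²τ² - 2ατ + 1` and
`conj D · E = (β²τ - α + iω)/β` once `ω² = β² - α²` is used; a second use of `ω² = β² - α²`
in `ξ₁²` and `ω ξ₁` turns the result into `G`.
-/

open Complex

section CrossingCoefficient

variable {τ α β ω : ℝ}

lemma charFactor_eq_ofReal_add_ofReal_mul_I :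
    (1 : ℂ) - α * τ + I * ω * τ = ((1 - α * τ : ℝ) : ℂ) + ((ω * τ : ℝ) : ℂ) * I := by
  push_cast
  ring

lemma normSq_charFactor (hω2 : ω ^ 2 = β ^ 2 - α ^ 2) :
    normSq ((1 : ℂ) - α * τ + I * ω * τ) = β ^ 2 * τ ^ 2 - 2 * α * τ + 1 := by
  rw [charFactor_eq_ofReal_add_ofReal_mul_I, normSq_add_mul_I]
  linear_combination τ ^ 2 * hω2

lemma charFactor_ne_zero (hατ : α * τ ≠ 1) : (1 : ℂ) - α * τ + I * ω * τ ≠ 0 := by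
  rw [charFactor_eq_ofReal_add_ofReal_mul_I, ← normSq_pos, normSq_add_mul_I]
  have := sub_ne_zero.mpr (Ne.symm hατ)
  positivity

lemma xi_eq_I_mul_of_tangency {α₁ β₁ : ℝ} (hβ : β ≠ 0) (hατ : α * τ ≠ 1)
    (hω2 : ω ^ 2 = β ^ 2 - α ^ 2)
    (htan : β * α₁ * (1 - α * τ) + β₁ * (τ * β ^ 2 - α) = 0) :
    1 / ((1 : ℂ) - α * τ + I * ω * τ) * ((α₁ : ℂ) + β₁ * ((I * ω - α) / β)) =
      I * (-(ω * β₁) / (β * (α * τ - 1)) : ℝ) := by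
  have hβC : (β : ℂ) ≠ 0 := ofReal_ne_zero.mpr hβ
  have hατC : (α : ℂ) * τ - 1 ≠ 0 := by exact_mod_cast sub_ne_zero.mpr hατ
  have hω2C : (ω : ℂ) ^ 2 = β ^ 2 - α ^ 2 := by exact_mod_cast hω2
  have htanC : (β : ℂ) * α₁ * (1 - α * τ) + β₁ * (τ * β ^ 2 - α) = 0 := by exact_mod_cast htan
  rw [one_div_mul_eq_div, div_eq_iff (charFactor_ne_zero hατ)]
  push_cast
  field_simp
  linear_combination -htanC - (β₁ * τ : ℂ) * hω2C + (β₁ * ω ^ 2 * τ : ℂ) * I_sq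

lemma re_crossingCoeff_of_imaginary_xi {β₁ α₂ β₂ : ℝ} (s : ℝ) (hβ : β ≠ 0)
    (hω2 : ω ^ 2 = β ^ 2 - α ^ 2) :
    (1 / ((1 : ℂ) - α * τ + I * ω * τ) * ((α₂ : ℂ) + β₂ * ((I * ω - α) / β) -
        2 * (τ : ℂ) * β₁ * ((I * ω - α) / β) * (I * s) +
        (τ : ℂ) ^ 2 * β * ((I * ω - α) / β) * (I * s) ^ 2)).re =
      ((1 - α * τ) * α₂ + ((β ^ 2 * τ - α) * (β₂ - τ ^ 2 * β * s ^ 2) + 2 * τ * β₁ * (ω * s)) / β) /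
        (β ^ 2 * τ ^ 2 - 2 * α * τ + 1) := by
  rw [one_div_mul_eq_div, div_re, ← add_div, normSq_charFactor hω2]
  congr 1
  simp only [pow_two, add_re, sub_re, ofReal_re, mul_re, div_ofReal_re, I_re, zero_mul, I_im,
    ofReal_im, mul_zero, sub_self, zero_sub, div_ofReal_im, sub_im, mul_im, one_mul, zero_add,
    sub_zero, re_ofNat, im_ofNat, add_zero, sub_neg_eq_add, mul_neg, one_re, add_im, one_im]
  field_simp
  linear_combination (β₂ - τ ^ 2 * β * s ^ 2) * τ * hω2

end CrossingCoefficient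

theorem stmt6_general (τ α β ω α₁ β₁ α₂ β₂ : ℝ) (hβ : β ≠ 0)
    (hατ : α * τ ≠ 1) (hω2 : ω ^ 2 = β ^ 2 - α ^ 2)
    (htan : β * α₁ * (1 - α * τ) + β₁ * (τ * β ^ 2 - α) = 0) :
    let E : ℂ := (Complex.I * ω - α) / β
    let ψ : ℂ := 1 / (((1 : ℂ) - α * τ) + Complex.I * ω * τ)
    let ξ₁ : ℂ := ψ * ((α₁ : ℂ) + (β₁ : ℂ) * E)
    (ψ * ((α₂ : ℂ) + (β₂ : ℂ) * E - 2 * (τ : ℂ) * β₁ * E * ξ₁ +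
        (τ : ℂ) ^ 2 * β * E * ξ₁ ^ 2)).re =
      ((α * τ - 1) ^ 3 * β ^ 2 * α₂ + β * (α * τ - 1) ^ 2 * (α - β ^ 2 * τ) * β₂ -
        β₁ ^ 2 * τ * (α ^ 2 - β ^ 2) * (β ^ 2 * τ ^ 2 + α * τ - 2)) /
      (β ^ 2 * (α * τ - 1) ^ 2 * (-(β ^ 2) * τ ^ 2 + 2 * α * τ - 1)) := by
  intro E ψ ξ₁
  rw [show ξ₁ = _ from xi_eq_I_mul_of_tangency hβ hατ hω2 htan,
    re_crossingCoeff_of_imaginary_xi _ hβ hω2]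
  have hατ' : α * τ - 1 ≠ 0 := sub_ne_zero.mpr hατ
  have hQ : β ^ 2 * τ ^ 2 - 2 * α * τ + 1 ≠ 0 := by
    rw [← normSq_charFactor hω2, Ne, normSq_eq_zero]
    exact charFactor_ne_zero hατ
  have hs2 : (-(ω * β₁) / (β * (α * τ - 1))) ^ 2 =
      β₁ ^ 2 * (β ^ 2 - α ^ 2) / (β * (α * τ - 1)) ^ 2 := by
    rw [div_pow, neg_sq, mul_pow, hω2, mul_comm]
  have hωs : ω * (-(ω * β₁) / (β * (α * τ - 1))) =
      -(β₁ * (β ^ 2 - α ^ 2)) / (β * (α * τ - 1)) := by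
    rw [← hω2]
    ring
  rw [hs2, hωs, show -(β ^ 2) * τ ^ 2 + 2 * α * τ - 1 = -(β ^ 2 * τ ^ 2 - 2 * α * τ + 1) by ring]
  field_simp
  ring

/-- Under the tangency condition, the second-order crossing coefficient
2σ₄ = Re(ψ[α₂ + β₂E − 2τβ₁Eξ₁ + τ²βEξ₁²]) equals
G/(β²(ατ−1)²(−β²τ²+2ατ−1)), with E = (iω−α)/β, ψ = 1/((1−ατ)+iωτ),
ξ₁ = ψ(α₁+β₁E), and G the curvature nondegeneracy quantity. -/
theorem stmt6 (τ α β ω α₁ β₁ α₂ β₂ : ℝ) (hτ : 0 < τ) (hβ : β ≠ 0)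
    (hατ : α * τ ≠ 1) (hω : 0 < ω) (hω2 : ω ^ 2 = β ^ 2 - α ^ 2)
    (htan : β * α₁ * (1 - α * τ) + β₁ * (τ * β ^ 2 - α) = 0) :
    let E : ℂ := (Complex.I * ω - α) / β
    let ψ : ℂ := 1 / (((1 : ℂ) - α * τ) + Complex.I * ω * τ)
    let ξ₁ : ℂ := ψ * ((α₁ : ℂ) + (β₁ : ℂ) * E)
    (ψ * ((α₂ : ℂ) + (β₂ : ℂ) * E - 2 * (τ : ℂ) * β₁ * E * ξ₁ +
        (τ : ℂ) ^ 2 * β * E * ξ₁ ^ 2)).re =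
      ((α * τ - 1) ^ 3 * β ^ 2 * α₂ + β * (α * τ - 1) ^ 2 * (α - β ^ 2 * τ) * β₂ -
        β₁ ^ 2 * τ * (α ^ 2 - β ^ 2) * (β ^ 2 * τ ^ 2 + α * τ - 2)) /
      (β ^ 2 * (α * τ - 1) ^ 2 * (-(β ^ 2) * τ ^ 2 + 2 * α * τ - 1)) :=
  stmt6_general τ α β ω α₁ β₁ α₂ β₂ hβ hατ hω2 htan
end

section
/- Let R₀ > 1 and let h : [0,1] → ℝ be continuous, nonincreasing, with 0 < h(y) ≤ 1 for all y ∈ [0,1] and h(0) = 1. Then there exists a unique ȳ ∈ (0,1) such that R₀·h(ȳ)·(1 − ȳ) = 1. Moreover ȳ ≤ 1 − 1/R₀, with strict inequality whenever h(ȳ) < 1. -/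
/-! The map `y ↦ R₀ h(y) (1 - y)` equals `R₀ > 1` at `0` and `0` at `1`, so it takes the value `1`
inside `(0, 1)` by the intermediate value theorem. Wherever it equals `1` we have `h > 0`, so the
product of the nonincreasing factor `R₀ h` and the decreasing positive factor `1 - y` is strictly
decreasing there, which gives uniqueness. Finally `1 / R₀ = h(ȳ) (1 - ȳ) ≤ 1 - ȳ` since `h ≤ 1`. -/

open Set

namespace SIS

variable {k : ℝ → ℝ}

theorem exists_mem_Ioo_mul_one_sub_eq_one (hk : ContinuousOn k (Icc 0 1)) (hk0 : 1 < k 0) :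
    ∃ y ∈ Ioo (0 : ℝ) 1, k y * (1 - y) = 1 := by
  have hcont : ContinuousOn (fun y => k y * (1 - y)) (Icc 0 1) :=
    hk.mul (continuousOn_const.sub continuousOn_id)
  have hone : (1 : ℝ) ∈ Icc (k 1 * (1 - 1)) (k 0 * (1 - 0)) := by
    constructor <;> simp only [sub_self, mul_zero, sub_zero, mul_one] <;> linarith
  obtain ⟨y, hy, hyeq⟩ := intermediate_value_Icc' zero_le_one hcont hone
  refine ⟨y, ⟨hy.1.lt_of_ne ?_, hy.2.lt_of_ne ?_⟩, hyeq⟩ <;> rintro rfl <;>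
    simp only [sub_self, mul_zero, sub_zero, mul_one] at hyeq <;> linarith

theorem mul_one_sub_lt_of_lt (hk : AntitoneOn k (Icc 0 1)) {y z : ℝ} (hy : y ∈ Icc (0 : ℝ) 1)
    (hz : z ∈ Icc (0 : ℝ) 1) (hyz : y < z) (hkz : 0 < k z) :
    k z * (1 - z) < k y * (1 - y) :=
  calc k z * (1 - z) < k z * (1 - y) := by gcongr
    _ ≤ k y * (1 - y) := mul_le_mul_of_nonneg_right (hk hy hz hyz.le) (by linarith [hy.2])

theorem eq_of_mul_one_sub_eq_one (hk : AntitoneOn k (Icc 0 1)) {y z : ℝ}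
    (hy : y ∈ Ioo (0 : ℝ) 1) (hz : z ∈ Ioo (0 : ℝ) 1)
    (hyeq : k y * (1 - y) = 1) (hzeq : k z * (1 - z) = 1) : y = z := by
  have pos_of_eq {x : ℝ} (hx : x ∈ Ioo (0 : ℝ) 1) (hxeq : k x * (1 - x) = 1) : 0 < k x :=
    pos_of_mul_pos_left (by rw [hxeq]; exact one_pos) (sub_pos.2 hx.2).le
  rcases lt_trichotomy y z with hyz | rfl | hzy
  · linarith [mul_one_sub_lt_of_lt hk (Ioo_subset_Icc_self hy) (Ioo_subset_Icc_self hz) hyz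
      (pos_of_eq hz hzeq)]
  · rfl
  · linarith [mul_one_sub_lt_of_lt hk (Ioo_subset_Icc_self hz) (Ioo_subset_Icc_self hy) hzy
      (pos_of_eq hy hyeq)]

end SIS

open SIS in
/-- For R₀ > 1 and a continuous nonincreasing behavioral response
function h on [0,1] with 0 < h ≤ 1 and h(0) = 1, there is a unique endemic
equilibrium ȳ ∈ (0,1) with R₀·h(ȳ)·(1−ȳ) = 1; moreover ȳ ≤ 1 − 1/R₀, with strict
inequality whenever h(ȳ) < 1. -/
theorem stmt9 (R₀ : ℝ) (hR : 1 < R₀) (h : ℝ → ℝ)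
    (hcont : ContinuousOn h (Set.Icc 0 1))
    (hmono : AntitoneOn h (Set.Icc 0 1))
    (hpos : ∀ y ∈ Set.Icc (0 : ℝ) 1, 0 < h y ∧ h y ≤ 1)
    (h0 : h 0 = 1) :
    ∃ ybar ∈ Set.Ioo (0 : ℝ) 1,
      R₀ * h ybar * (1 - ybar) = 1 ∧
      (∀ z ∈ Set.Ioo (0 : ℝ) 1, R₀ * h z * (1 - z) = 1 → z = ybar) ∧
      ybar ≤ 1 - 1 / R₀ ∧
      (h ybar < 1 → ybar < 1 - 1 / R₀) := by
  have hanti : AntitoneOn (fun y => R₀ * h y) (Icc 0 1) := fun a ha b hb hab =>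
    mul_le_mul_of_nonneg_left (hmono ha hb hab) (by linarith)
  obtain ⟨y, hy, hyeq⟩ := exists_mem_Ioo_mul_one_sub_eq_one (k := fun y => R₀ * h y)
    (continuousOn_const.mul hcont) (by simpa [h0] using hR)
  have hinv : h y * (1 - y) = 1 / R₀ :=
    eq_one_div_of_mul_eq_one_right (by rw [← mul_assoc]; exact hyeq)
  have hy1 : 0 < 1 - y := sub_pos.2 hy.2
  refine ⟨y, hy, hyeq, fun z hz hzeq => eq_of_mul_one_sub_eq_one hanti hz hy hzeq hyeq, ?_,
    fun hlt => ?_⟩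
  · linarith [mul_le_of_le_one_left hy1.le (hpos y (Ioo_subset_Icc_self hy)).2]
  · linarith [mul_lt_of_lt_one_left hy1 hlt]
end

section
/- Let R₀ > 1, p > 0 and ȳ ∈ (0,1) satisfy exp(p·ȳ) = R₀·(1 − ȳ). Set α = −ȳ/(1 − ȳ), β = −p·ȳ, α₁ = −1/((1 − ȳ)·R₀·(1 + p(1 − ȳ))), β₁ = −p·(1 − ȳ)/(R₀·(1 + p(1 − ȳ))). Then β·α₁·(1 − 10α) + β₁·(10β² − α) = p·ȳ²·(11 − ȳ − 10p²·(1 − ȳ)³) / (R₀·(1 + p(1 − ȳ))·(1 − ȳ)²). Consequently this quantity vanishes if and only if 10·(1 − ȳ)³·p² = 11 − ȳ, i.e. if and only if p = (1/10)·√(10·(1 − ȳ)·(11 − ȳ))/(1 − ȳ)². -/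
/-!
Clearing the denominators of `α`, `α₁`, `β₁` turns the tangency quantity into
`p ȳ² (11 - ȳ - 10 p² (1 - ȳ)³)` over a positive denominator, so it vanishes exactly when the
last factor does. Since `p > 0`, the equation `10 (1 - ȳ)³ p² = 11 - ȳ` is solved for `p` by
taking the positive square root.
-/

namespace ExpResponseSIS

lemma tangency_eq (R₀ p y : ℝ) (hR : R₀ ≠ 0) (hy : 1 - y ≠ 0) (hq : 1 + p * (1 - y) ≠ 0) :
    -(p * y) * (-1 / ((1 - y) * R₀ * (1 + p * (1 - y)))) * (1 - 10 * (-y / (1 - y))) +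
        -(p * (1 - y)) / (R₀ * (1 + p * (1 - y))) * (10 * (-(p * y)) ^ 2 - -y / (1 - y)) =
      p * y ^ 2 * (11 - y - 10 * p ^ 2 * (1 - y) ^ 3) /
        (R₀ * (1 + p * (1 - y)) * (1 - y) ^ 2) := by
  field_simp
  ring

lemma tangency_closedForm_eq_zero_iff {R₀ p y : ℝ} (hR : R₀ ≠ 0) (hp : p ≠ 0) (hy₀ : y ≠ 0)
    (hy₁ : 1 - y ≠ 0) (hq : 1 + p * (1 - y) ≠ 0) :
    p * y ^ 2 * (11 - y - 10 * p ^ 2 * (1 - y) ^ 3) /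
        (R₀ * (1 + p * (1 - y)) * (1 - y) ^ 2) = 0 ↔
      10 * (1 - y) ^ 3 * p ^ 2 = 11 - y := by
  simp only [div_eq_zero_iff, mul_eq_zero, pow_eq_zero_iff two_ne_zero, hR, hp, hy₀, hy₁, hq,
    sub_eq_zero, false_or, or_false, eq_comm (a := 11 - y)]
  rw [mul_right_comm]

lemma mul_cube_mul_sq_eq_iff_eq_sqrt {u p v : ℝ} (hu : 0 < u) (hp : 0 < p) :
    10 * u ^ 3 * p ^ 2 = v ↔ p = (1 / 10) * Real.sqrt (10 * u * v) / u ^ 2 := by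
  have hsqrt : p = (1 / 10) * Real.sqrt (10 * u * v) / u ^ 2 ↔
      Real.sqrt (10 * u * v) = 10 * u ^ 2 * p := by
    rw [eq_div_iff (by positivity)]
    constructor <;> intro h <;> linarith
  rw [hsqrt, Real.sqrt_eq_iff_mul_self_eq_of_pos (by positivity)]
  constructor
  · rintro rfl
    ring
  · intro h
    apply mul_left_cancel₀ (by positivity : 10 * u ≠ 0)
    linear_combination h

end ExpResponseSIS

open ExpResponseSIS in
theorem stmt18_general (R₀ p ybar : ℝ) (hR : 1 < R₀) (hp : 0 < p)
    (hy : ybar ∈ Set.Ioo (0 : ℝ) 1) :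
    let α : ℝ := -ybar / (1 - ybar)
    let β : ℝ := -(p * ybar)
    let α₁ : ℝ := -1 / ((1 - ybar) * R₀ * (1 + p * (1 - ybar)))
    let β₁ : ℝ := -(p * (1 - ybar)) / (R₀ * (1 + p * (1 - ybar)))
    β * α₁ * (1 - 10 * α) + β₁ * (10 * β ^ 2 - α) =
      p * ybar ^ 2 * (11 - ybar - 10 * p ^ 2 * (1 - ybar) ^ 3) /
        (R₀ * (1 + p * (1 - ybar)) * (1 - ybar) ^ 2) ∧
    (β * α₁ * (1 - 10 * α) + β₁ * (10 * β ^ 2 - α) = 0 ↔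
      10 * (1 - ybar) ^ 3 * p ^ 2 = 11 - ybar) ∧
    (β * α₁ * (1 - 10 * α) + β₁ * (10 * β ^ 2 - α) = 0 ↔
      p = (1 / 10) * Real.sqrt (10 * (1 - ybar) * (11 - ybar)) / (1 - ybar) ^ 2) := by
  obtain ⟨hy₀, hy₁⟩ := hy
  have hu : 0 < 1 - ybar := sub_pos.2 hy₁
  have hR₀ : R₀ ≠ 0 := by positivity
  have hq : 1 + p * (1 - ybar) ≠ 0 := by positivity
  have hvanish := tangency_closedForm_eq_zero_iff hR₀ hp.ne' hy₀.ne' hu.ne' hq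
  intro α β α₁ β₁
  rw [tangency_eq R₀ p ybar hR₀ hu.ne' hq]
  exact ⟨rfl, hvanish, hvanish.trans (mul_cube_mul_sq_eq_iff_eq_sqrt hu hp)⟩

/-- For the exponential response with τ = 10, the tangency quantity
β·α₁·(1−10α) + β₁·(10β²−α) equals pȳ²(11−ȳ−10p²(1−ȳ)³)/(R₀(1+p(1−ȳ))(1−ȳ)²);
it vanishes iff 10(1−ȳ)³p² = 11−ȳ, i.e. iff p = (1/10)√(10(1−ȳ)(11−ȳ))/(1−ȳ)². -/
theorem stmt18 (R₀ p ybar : ℝ) (hR : 1 < R₀) (hp : 0 < p)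
    (hy : ybar ∈ Set.Ioo (0 : ℝ) 1)
    (heq : Real.exp (p * ybar) = R₀ * (1 - ybar)) :
    let α : ℝ := -ybar / (1 - ybar)
    let β : ℝ := -(p * ybar)
    let α₁ : ℝ := -1 / ((1 - ybar) * R₀ * (1 + p * (1 - ybar)))
    let β₁ : ℝ := -(p * (1 - ybar)) / (R₀ * (1 + p * (1 - ybar)))
    β * α₁ * (1 - 10 * α) + β₁ * (10 * β ^ 2 - α) =
      p * ybar ^ 2 * (11 - ybar - 10 * p ^ 2 * (1 - ybar) ^ 3) /
        (R₀ * (1 + p * (1 - ybar)) * (1 - ybar) ^ 2) ∧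
    (β * α₁ * (1 - 10 * α) + β₁ * (10 * β ^ 2 - α) = 0 ↔
      10 * (1 - ybar) ^ 3 * p ^ 2 = 11 - ybar) ∧
    (β * α₁ * (1 - 10 * α) + β₁ * (10 * β ^ 2 - α) = 0 ↔
      p = (1 / 10) * Real.sqrt (10 * (1 - ybar) * (11 - ybar)) / (1 - ybar) ^ 2) :=
  stmt18_general R₀ p ybar hR hp hy
end
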